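/- arXiv:2401.07147 — 6 statements merged into one kernel-verified Lean document; each statement's English description precedes it below -/
import Mathlib

section
/- Let (𝒫_n)_{n∈ℕ} be a sequence where each 𝒫_n = (C_1,…,C_{m_n}) is an ordered partition of {0,1}^n, and suppose there is a constant c > 0 such that for all sufficiently large n every part C_i of 𝒫_n satisfies |C_i| ≤ c·n. Then |Orbit_n(𝒫_n)| grows faster than any polynomial in 2^n; precisely, for every k ∈ ℕ and every real C > 0 there exists n with |Orbit_n(𝒫_n)| > C · 2^{k·n}. -/
/-- Binary strings of length `n`: the set `{0,1}ⁿ`. -/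
abbrev Str (n : ℕ) := Fin n → Bool

/-- The action of `Sym_n` on strings, permuting positions: `(π·v)_i = v_{π⁻¹(i)}`. -/
def act {n : ℕ} (π : Equiv.Perm (Fin n)) (v : Str n) : Str n := fun i => v (π.symm i)

/-- The action of `Sym_n` on sets of strings. -/
def actSet {n : ℕ} (π : Equiv.Perm (Fin n)) (C : Set (Str n)) : Set (Str n) := act π '' C

/-- The (setwise) stabiliser of a set of strings. -/
def setStab {n : ℕ} (C : Set (Str n)) : Set (Equiv.Perm (Fin n)) := {π | actSet π C = C}

/-- The orbit of a set of strings under `Sym_n`. -/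
def setOrbit {n : ℕ} (C : Set (Str n)) : Set (Set (Str n)) := {D | ∃ π, D = actSet π C}

/-- An ordered partition of `{0,1}ⁿ`: a tuple of pairwise disjoint nonempty subsets
whose union is everything. -/
def IsOrderedPartition {n m : ℕ} (C : Fin m → Set (Str n)) : Prop :=
  (∀ i, (C i).Nonempty) ∧ (Pairwise fun i j => Disjoint (C i) (C j)) ∧ (⋃ i, C i) = Set.univ

/-- The stabiliser of an ordered partition (componentwise). -/
def tupStab {n m : ℕ} (C : Fin m → Set (Str n)) : Set (Equiv.Perm (Fin n)) :=
  {π | ∀ i, actSet π (C i) = C i}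

/-- The orbit of an ordered partition under the componentwise action of `Sym_n`. -/
def tupOrbit {n m : ℕ} (C : Fin m → Set (Str n)) : Set (Fin m → Set (Str n)) :=
  {D | ∃ π, D = fun i => actSet π (C i)}

/-- Pointwise stabiliser of a partition (setoid) of `[n]`: permutations fixing
each part setwise. -/
def ptStab {n : ℕ} (s : Setoid (Fin n)) : Set (Equiv.Perm (Fin n)) :=
  {π | ∀ P ∈ s.classes, (π : Fin n → Fin n) '' P = P}

/-- Setwise stabiliser of a partition of `[n]`: permutations mapping parts to parts. -/
def swStab {n : ℕ} (s : Setoid (Fin n)) : Set (Equiv.Perm (Fin n)) :=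
  {π | ∀ P ∈ s.classes, (π : Fin n → Fin n) '' P ∈ s.classes}

/-- A partition `s` of `[n]` is a supporting partition of `G` if its pointwise
stabiliser is contained in `G`. -/
def IsSupporting {n : ℕ} (G : Set (Equiv.Perm (Fin n))) (s : Setoid (Fin n)) : Prop :=
  ∀ π ∈ ptStab s, π ∈ G

/-- `s` is as coarse as `t`: every part of `t` is contained in some part of `s`. -/
def AsCoarseAs {X : Type*} (s t : Setoid X) : Prop :=
  ∀ P ∈ t.classes, ∃ Q ∈ s.classes, P ⊆ Q

/-- `s` is the coarsest supporting partition of `G`. -/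
def IsCoarsestSupp {n : ℕ} (G : Set (Equiv.Perm (Fin n))) (s : Setoid (Fin n)) : Prop :=
  IsSupporting G s ∧ ∀ t, IsSupporting G t → AsCoarseAs s t

/-- The intersection `⊓_{a ∈ A} f(a)` of a family of partitions: parts are the
nonempty intersections of parts. -/
def interSetoid {X ι : Type*} (A : Set ι) (f : ι → Setoid X) : Setoid X where
  r x y := ∀ a ∈ A, (f a).r x y
  iseqv := ⟨fun x a _ => (f a).refl x,
            fun h a ha => (f a).symm (h a ha),
            fun h h' a ha => (f a).trans (h a ha) (h' a ha)⟩

/-- `SP(a)` for a string `a`: the partition of positions according to the bit of `a`. -/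
def strSetoid {n : ℕ} (a : Str n) : Setoid (Fin n) where
  r k j := a k = a j
  iseqv := ⟨fun _ => rfl, Eq.symm, Eq.trans⟩

/-- `π ∈ Sym_n` realises a permutation `σ` of the parts of a partition `s` if
`π(P) = σ(P)` for every part `P`. -/
def Realises {n : ℕ} (π : Equiv.Perm (Fin n)) {s : Setoid (Fin n)}
    (σ : Equiv.Perm s.classes) : Prop :=
  ∀ P : s.classes, (π : Fin n → Fin n) '' (P : Set (Fin n)) = ((σ P : Set (Fin n)))

/-!
By orbit–stabiliser, `n! = |Orbit(𝒫)| · |Stab(𝒫)|`. A permutation stabilising `𝒫` keeps every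
string inside its part, so fixing one more string costs a factor of at most the part size
`c n`. The `t = ⌈log₂ n⌉` strings recording the binary digits of the positions separate all
positions, so their joint stabiliser is trivial and `|Stab(𝒫)| ≤ (c n) ^ t = 2 ^ O(log² n)`,
which is negligible against `n! ≥ (n / 2) ^ (n / 2)`.
-/

open Nat Pointwise MulAction

theorem Subgroup.card_le_ncard_mul_card_inf_stabilizer {G α : Type*} [Group G] [MulAction G α]
    {H : Subgroup G} {x : α} {s : Set α} (hs : s.Finite) (hx : ∀ h ∈ H, h • x ∈ s) :
    Nat.card H ≤ s.ncard * Nat.card (H ⊓ stabilizer G x : Subgroup G) := by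
  have hrelIndex : (stabilizer G x).relIndex H = (orbit H x).ncard := by
    rw [Subgroup.relIndex, show (stabilizer G x).subgroupOf H = stabilizer H x by ext; rfl,
      index_stabilizer]
  have horbit : orbit H x ⊆ s := by
    rintro _ ⟨h, rfl⟩
    exact hx h h.2
  rw [← Subgroup.relIndex_bot_left, ← Subgroup.relIndex_mul_relIndex ⊥ (H ⊓ stabilizer G x) H
    bot_le inf_le_left, Subgroup.relIndex_bot_left, Subgroup.inf_relIndex_left, hrelIndex,
    mul_comm]
  exact Nat.mul_le_mul_right _ (Set.ncard_le_ncard horbit hs)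

section PartitionStabilizer

variable {G α ι : Type*} [Group G] [MulAction G α] [Finite α] {P : ι → Set α} {b : ℕ}

theorem card_le_mul_card_inf_stabilizer (hcov : ⋃ i, P i = Set.univ)
    (hb : ∀ i, (P i).ncard ≤ b) {H : Subgroup G} (hH : H ≤ stabilizer G P) (x : α) :
    Nat.card H ≤ b * Nat.card (H ⊓ stabilizer G x : Subgroup G) := by
  obtain ⟨i, hi⟩ := Set.mem_iUnion.mp (hcov ▸ Set.mem_univ x)
  refine (Subgroup.card_le_ncard_mul_card_inf_stabilizer (Set.toFinite (P i)) ?_).trans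
    (Nat.mul_le_mul_right _ (hb i))
  intro h hh
  rw [← congrFun (mem_stabilizer_iff.mp (hH hh)) i]
  exact Set.smul_mem_smul_set hi

theorem card_le_pow_mul_card_inf_iInf_stabilizer (hcov : ⋃ i, P i = Set.univ)
    (hb : ∀ i, (P i).ncard ≤ b) {H : Subgroup G} (hH : H ≤ stabilizer G P)
    (x : ℕ → α) (t : ℕ) :
    Nat.card H ≤ b ^ t * Nat.card (H ⊓ ⨅ j < t, stabilizer G (x j) : Subgroup G) := by
  induction t with
  | zero => simp
  | succ t ih =>
    calc Nat.card H ≤ b ^ t * Nat.card (H ⊓ ⨅ j < t, stabilizer G (x j) : Subgroup G) := ih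
      _ ≤ b ^ t * (b * Nat.card (H ⊓ ⨅ j < t + 1, stabilizer G (x j) : Subgroup G)) := by
        rw [Nat.iInf_lt_succ, ← inf_assoc]
        exact Nat.mul_le_mul_left _
          (card_le_mul_card_inf_stabilizer hcov hb (inf_le_left.trans hH) (x t))
      _ = b ^ (t + 1) * Nat.card (H ⊓ ⨅ j < t + 1, stabilizer G (x j) : Subgroup G) := by
        ring

end PartitionStabilizer

theorem Nat.eq_of_testBit_eq_of_lt_two_pow {a b t : ℕ} (ha : a < 2 ^ t) (hb : b < 2 ^ t)
    (h : ∀ j < t, a.testBit j = b.testBit j) : a = b := by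
  refine Nat.eq_of_testBit_eq fun j => ?_
  by_cases hj : j < t
  · exact h j hj
  · have hpow : 2 ^ t ≤ 2 ^ j := Nat.pow_le_pow_right two_pos (not_lt.mp hj)
    rw [Nat.testBit_eq_false_of_lt (ha.trans_le hpow),
      Nat.testBit_eq_false_of_lt (hb.trans_le hpow)]

instance {n : ℕ} : MulAction (Equiv.Perm (Fin n)) (Str n) where
  smul := act
  one_smul _ := rfl
  mul_smul _ _ _ := rfl

def digitStr (n j : ℕ) : Str n := fun i => i.val.testBit j

theorem iInf_stabilizer_digitStr_eq_bot {n t : ℕ} (hn : n ≤ 2 ^ t) :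
    ⨅ j < t, stabilizer (Equiv.Perm (Fin n)) (digitStr n j) = ⊥ := by
  refine eq_bot_iff.mpr fun π hπ => ?_
  simp only [Subgroup.mem_iInf, mem_stabilizer_iff] at hπ
  rw [Subgroup.mem_bot, ← inv_eq_one]
  ext i
  exact Nat.eq_of_testBit_eq_of_lt_two_pow ((π⁻¹ i).isLt.trans_le hn) (i.isLt.trans_le hn)
    fun j hj => congrFun (hπ j hj) i

theorem tupOrbit_eq_orbit {n m : ℕ} (P : Fin m → Set (Str n)) :
    tupOrbit P = orbit (Equiv.Perm (Fin n)) P := by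
  ext D
  exact exists_congr fun π => eq_comm

theorem factorial_le_ncard_tupOrbit_mul_pow {n m t b : ℕ} {P : Fin m → Set (Str n)}
    (hcov : ⋃ i, P i = Set.univ) (hb : ∀ i, (P i).ncard ≤ b) (hn : n ≤ 2 ^ t) :
    n ! ≤ (tupOrbit P).ncard * b ^ t := by
  have hstab := card_le_pow_mul_card_inf_iInf_stabilizer hcov hb
    (le_refl (stabilizer (Equiv.Perm (Fin n)) P)) (digitStr n) t
  rw [iInf_stabilizer_digitStr_eq_bot hn, inf_bot_eq, Subgroup.card_bot, mul_one] at hstab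
  calc n ! = Nat.card (Equiv.Perm (Fin n)) := by rw [Nat.card_perm, Nat.card_fin]
    _ = (tupOrbit P).ncard * Nat.card (stabilizer (Equiv.Perm (Fin n)) P) := by
      rw [← Subgroup.card_mul_index, index_stabilizer _ P, tupOrbit_eq_orbit, mul_comm]
    _ ≤ (tupOrbit P).ncard * b ^ t := Nat.mul_le_mul_left _ hstab

theorem pow_self_le_factorial_two_mul (M : ℕ) : M ^ M ≤ (2 * M)! := by
  have h := Nat.factorial_mul_pow_sub_le_factorial (show M ≤ 2 * M by omega)
  rw [show 2 * M - M = M by omega] at h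
  exact le_of_mul_le_of_one_le_right h (Nat.factorial_pos M)

theorem three_mul_sq_lt_two_pow {s : ℕ} (hs : 9 ≤ s) : 3 * s ^ 2 < 2 ^ s := by
  induction s, hs using Nat.le_induction with
  | base => norm_num
  | succ s hs ih => rw [pow_succ 2 s]; nlinarith

/-- For `n = 2 ^ (s + 1)`, these are the exponents of `2` in the upper bound
`2 ^ D · 2 ^ (k n) · (2 ^ D n) ^ (s + 1)` on `|Orbit| · |Stab|` and in the lower bound
`(n / 2) ^ (n / 2) ≤ n!`. -/
theorem exists_poly_lt_mul_two_pow (N D k : ℕ) :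
    ∃ s ≥ N, D + k * 2 ^ (s + 1) + (D + s + 1) * (s + 1) < s * 2 ^ s := by
  obtain ⟨s, hs⟩ : ∃ s, s = N + D + 2 * k + 9 := ⟨_, rfl⟩
  refine ⟨s, by omega, ?_⟩
  have hD : D ≤ s := by omega
  have hks : (2 * k + 1) * 2 ^ s ≤ s * 2 ^ s := Nat.mul_le_mul_right _ (by omega)
  have hquad : D + (D + s + 1) * (s + 1) ≤ 3 * s ^ 2 := by
    nlinarith [Nat.mul_le_mul_right (s + 1) (show D + s + 1 ≤ 2 * s + 1 by omega)]
  have hsq := three_mul_sq_lt_two_pow (show 9 ≤ s by omega)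
  rw [pow_succ 2 s]
  nlinarith

theorem stmt_0_general
    (m : ℕ → ℕ) (P : ∀ n, Fin (m n) → Set (Str n))
    (hpart : ∀ n, IsOrderedPartition (P n))
    (c : ℝ)
    (hbound : ∃ N, ∀ n ≥ N, ∀ i, ((P n i).ncard : ℝ) ≤ c * n) :
    ∀ (k : ℕ) (C : ℝ), 0 < C → ∃ n, C * (2 : ℝ) ^ (k * n) < ((tupOrbit (P n)).ncard : ℝ) := by
  intro k C _
  obtain ⟨N, hN⟩ := hbound
  obtain ⟨D, hD⟩ := pow_unbounded_of_one_lt (max C c) one_lt_two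
  obtain ⟨s, hsN, hs⟩ := exists_poly_lt_mul_two_pow N D k
  obtain ⟨n, hn⟩ : ∃ n, n = 2 ^ (s + 1) := ⟨_, rfl⟩
  refine ⟨n, ?_⟩
  by_contra! horbit
  have hparts (i) : (P n i).ncard ≤ 2 ^ D * n := by
    have hNn : N ≤ n := hn ▸ (hsN.trans s.le_succ).trans Nat.lt_two_pow_self.le
    have hsize : ((P n i).ncard : ℝ) ≤ 2 ^ D * n :=
      (hN n hNn i).trans (by gcongr; exact (le_max_right C c).trans hD.le)
    exact_mod_cast hsize
  have horbit' : (tupOrbit (P n)).ncard ≤ 2 ^ D * 2 ^ (k * n) := by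
    have hcard : ((tupOrbit (P n)).ncard : ℝ) ≤ 2 ^ D * 2 ^ (k * n) :=
      horbit.trans (by gcongr; exact (le_max_left C c).trans hD.le)
    exact_mod_cast hcard
  refine lt_irrefl (n !) ?_
  calc n ! ≤ (tupOrbit (P n)).ncard * (2 ^ D * n) ^ (s + 1) :=
        factorial_le_ncard_tupOrbit_mul_pow (hpart n).2.2 hparts hn.le
    _ ≤ 2 ^ D * 2 ^ (k * n) * (2 ^ D * n) ^ (s + 1) := Nat.mul_le_mul_right _ horbit'
    _ = 2 ^ (D + k * 2 ^ (s + 1) + (D + s + 1) * (s + 1)) := by rw [hn]; ring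
    _ < 2 ^ (s * 2 ^ s) := Nat.pow_lt_pow_right one_lt_two hs
    _ = (2 ^ s) ^ (2 ^ s) := pow_mul 2 s (2 ^ s)
    _ ≤ n ! := hn ▸ _root_.pow_succ' 2 s ▸ pow_self_le_factorial_two_mul (2 ^ s)

/-- If `(𝒫_n)` is a sequence of ordered partitions of `{0,1}ⁿ` with all
parts of size at most `c·n` (for sufficiently large `n`), then `|Orbit_n(𝒫_n)|` grows
faster than any polynomial in `2ⁿ`. -/
theorem stmt_0
    (m : ℕ → ℕ) (P : ∀ n, Fin (m n) → Set (Str n))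
    (hpart : ∀ n, IsOrderedPartition (P n))
    (c : ℝ) (hc : 0 < c)
    (hbound : ∃ N, ∀ n ≥ N, ∀ i, ((P n i).ncard : ℝ) ≤ c * n) :
    ∀ (k : ℕ) (C : ℝ), 0 < C → ∃ n, C * (2 : ℝ) ^ (k * n) < ((tupOrbit (P n)).ncard : ℝ) :=
  stmt_0_general m P hpart c hbound
end

section
/- Let 𝒫 = (C_1,…,C_m) be an ordered partition of {0,1}^n. Then Stab_n(𝒫) ⊆ ⋂_{i=1}^m Stab_n(SP(C_i)), where SP(C_i) is the coarsest supporting partition of the group Stab_n(C_i) ≤ Sym_n and Stab_n(SP(C_i)) is the setwise stabiliser of this partition of [n]. -/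
/-!
A permutation `π` stabilising `C` normalises `G = Stab(C)`, so transporting a partition of
`[n]` along `π` maps supporting partitions of `G` to supporting partitions of `G`. Hence the
transport of the coarsest supporting partition `SP(C)` is again a coarsest one, and by
uniqueness it is `SP(C)` itself: `π` permutes the parts of `SP(C)`.
-/

open Equiv

lemma asCoarseAs_iff_le {X : Type*} {s t : Setoid X} : AsCoarseAs s t ↔ t ≤ s := by
  constructor
  · intro h x y hxy
    obtain ⟨P, hP, hxP, hyP⟩ := t.rel_iff_exists_classes.mp hxy
    obtain ⟨Q, hQ, hPQ⟩ := h P hP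
    exact s.rel_iff_exists_classes.mpr ⟨Q, hQ, hPQ hxP, hPQ hyP⟩
  · rintro h _ ⟨y, rfl⟩
    exact ⟨{x | s x y}, s.mem_classes y, fun x hx => h hx⟩

lemma Setoid.image_mem_classes_of_comap_eq {X : Type*} {s : Setoid X} {π : Perm X}
    (hπ : s.comap π = s) {P : Set X} (hP : P ∈ s.classes) : π '' P ∈ s.classes := by
  obtain ⟨y, rfl⟩ := hP
  refine ⟨π y, Set.ext fun z => ?_⟩
  have hrel := comap_rel π s (π.symm z) y
  rw [hπ, apply_symm_apply] at hrel
  rw [Equiv.image_eq_preimage_symm]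
  exact hrel

section StabSubgroup

variable {n : ℕ}

lemma actSet_one (C : Set (Str n)) : actSet 1 C = C :=
  Set.image_id C

lemma actSet_mul (π σ : Perm (Fin n)) (C : Set (Str n)) :
    actSet (π * σ) C = actSet π (actSet σ C) :=
  (Set.image_image (act π) (act σ) C).symm

def setStabSubgroup (C : Set (Str n)) : Subgroup (Perm (Fin n)) where
  carrier := setStab C
  one_mem' := actSet_one C
  mul_mem' {π σ} hπ hσ := by
    change actSet (π * σ) C = C
    rw [actSet_mul, hσ, hπ]
  inv_mem' {π} hπ := by
    change actSet π⁻¹ C = C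
    conv_lhs => rw [← hπ, ← actSet_mul, inv_mul_cancel, actSet_one]

end StabSubgroup

section Supporting

variable {n : ℕ} {G : Subgroup (Perm (Fin n))} {π : Perm (Fin n)} {s : Setoid (Fin n)}

lemma mem_ptStab_iff {σ : Perm (Fin n)} : σ ∈ ptStab s ↔ ∀ x, s (σ x) x := by
  constructor
  · intro hσ x
    have hx : σ x ∈ σ '' {y | s y x} := ⟨x, s.refl x, rfl⟩
    rwa [hσ _ (s.mem_classes x)] at hx
  · rintro hσ _ ⟨y, rfl⟩
    refine Set.Subset.antisymm ?_ fun x hx => ⟨σ.symm x, ?_, σ.apply_symm_apply x⟩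
    · rintro _ ⟨x, hx, rfl⟩
      exact s.trans (hσ x) hx
    · have hσx := hσ (σ.symm x)
      rw [apply_symm_apply] at hσx
      exact s.trans (s.symm hσx) hx

lemma IsSupporting.comap (hs : IsSupporting G s) (hπ : π ∈ G) :
    IsSupporting G (s.comap π) := by
  intro σ hσ
  have hconj : π * σ * π⁻¹ ∈ G := by
    refine hs _ (mem_ptStab_iff.mpr fun y => ?_)
    simpa [Setoid.comap_rel] using mem_ptStab_iff.mp hσ (π⁻¹ y)
  simpa [mul_assoc] using G.mul_mem (G.mul_mem (G.inv_mem hπ) hconj) hπ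

lemma IsCoarsestSupp.comap (hs : IsCoarsestSupp G s) (hπ : π ∈ G) :
    IsCoarsestSupp G (s.comap π) := by
  refine ⟨hs.1.comap hπ, fun t ht => asCoarseAs_iff_le.mpr fun x y hxy => ?_⟩
  have hle := asCoarseAs_iff_le.mp (hs.2 _ (ht.comap (G.inv_mem hπ)))
  exact hle (x := π x) (y := π y) (by simpa [Setoid.comap_rel] using hxy)

end Supporting

lemma IsCoarsestSupp.unique {n : ℕ} {G : Set (Perm (Fin n))} {s t : Setoid (Fin n)}
    (hs : IsCoarsestSupp G s) (ht : IsCoarsestSupp G t) : s = t :=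
  le_antisymm (asCoarseAs_iff_le.mp (ht.2 s hs.1)) (asCoarseAs_iff_le.mp (hs.2 t ht.1))

theorem stmt_2_general {n m : ℕ} (C : Fin m → Set (Str n))
    (sp : Fin m → Setoid (Fin n))
    (hsp : ∀ i, IsCoarsestSupp (setStab (C i)) (sp i)) :
    tupStab C ⊆ ⋂ i, swStab (sp i) := by
  intro π hπ
  refine Set.mem_iInter.mpr fun i P hP => Setoid.image_mem_classes_of_comap_eq ?_ hP
  have hcoarsest : IsCoarsestSupp (setStabSubgroup (C i)) (sp i) := hsp i
  exact (hcoarsest.comap (hπ i)).unique hcoarsest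

/-- the stabiliser of an ordered partition is contained in the
intersection of the setwise stabilisers of the coarsest supporting partitions
`SP(C_i)` of the stabilisers of its parts. -/
theorem stmt_2 {n m : ℕ} (C : Fin m → Set (Str n)) (h : IsOrderedPartition C)
    (sp : Fin m → Setoid (Fin n))
    (hsp : ∀ i, IsCoarsestSupp (setStab (C i)) (sp i)) :
    tupStab C ⊆ ⋂ i, swStab (sp i) :=
  stmt_2_general C sp hsp
end

section
/- Let A_1,…,A_m ⊆ {0,1}^n and fix a tuple σ̄ ∈ ×_{i=1}^m Sym(SP(A_i)) of permutations of the parts of the coarsest supporting partitions SP(A_i). Then there exists a permutation θ_{σ̄} of the parts of the intersection partition ⊓_{i=1}^m SP(A_i) such that every π ∈ Sym_n that realises σ̄ also realises θ_{σ̄}. -/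
/-!
Each part of `⊓ᵢ 𝒬ᵢ` is an intersection `⋂ᵢ Pᵢ` of parts `Pᵢ ∈ 𝒬ᵢ`, and a permutation `π`
realising `σ̄` sends it to `⋂ᵢ σᵢ(Pᵢ)`, which depends on `σ̄` only. So if some `π₀` realises `σ̄`,
the permutation of parts induced by `π₀` is realised by every such `π`; if none does, any `θ` works.
-/

namespace Setoid

variable {X : Type*}

lemma image_setOf_rel_eq_of_mem_classes {s : Setoid X} (π : Equiv.Perm X) (y : X)
    (h : π '' {x | s x y} ∈ s.classes) : π '' {x | s x y} = {x | s x (π y)} :=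
  eq_of_mem_classes h ⟨y, s.refl y, rfl⟩ (s.mem_classes (π y)) (s.refl (π y))

lemma symm_image_setOf_rel {s : Setoid X} {π : Equiv.Perm X}
    (h : ∀ y, π '' {x | s x y} = {x | s x (π y)}) (y : X) :
    π.symm '' {x | s x y} = {x | s x (π.symm y)} := by
  have hy := h (π.symm y)
  rw [Equiv.apply_symm_apply] at hy
  rw [← hy, Equiv.symm_image_image]

def classesPerm (s : Setoid X) (π : Equiv.Perm X)
    (h : ∀ y, π '' {x | s x y} = {x | s x (π y)}) : Equiv.Perm s.classes :=
  Equiv.Perm.subtypePerm (Equiv.Set.congr π) fun P => by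
    rw [Equiv.Set.congr_apply]
    constructor
    · rintro ⟨z, hz⟩
      exact ⟨π.symm z, by rw [← symm_image_setOf_rel h, ← hz, Equiv.symm_image_image]⟩
    · rintro ⟨y, rfl⟩
      exact ⟨π y, h y⟩

@[simp]
lemma coe_classesPerm_apply (s : Setoid X) (π : Equiv.Perm X)
    (h : ∀ y, π '' {x | s x y} = {x | s x (π y)}) (P : s.classes) :
    (s.classesPerm π h P : Set X) = π '' P :=
  rfl

end Setoid

lemma interSetoid_univ_setOf_rel {X ι : Type*} (f : ι → Setoid X) (y : X) :
    {x | interSetoid Set.univ f x y} = ⋂ i, {x | f i x y} := by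
  ext x
  simp only [Set.mem_ofPred_eq, Set.mem_iInter]
  exact ⟨fun h i => h i trivial, fun h i _ => h i⟩

lemma image_interSetoid_univ_setOf_rel {X ι : Type*} (f : ι → Setoid X) (π : Equiv.Perm X)
    (y : X) : π '' {x | interSetoid Set.univ f x y} = ⋂ i, π '' {x | f i x y} := by
  rw [interSetoid_univ_setOf_rel, Set.image_iInter π.bijective]

lemma Realises.image_setOf_rel {n : ℕ} {π : Equiv.Perm (Fin n)} {s : Setoid (Fin n)}
    {σ : Equiv.Perm s.classes} (hπ : Realises π σ) (y : Fin n) :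
    π '' {x | s x y} = {x | s x (π y)} :=
  Setoid.image_setOf_rel_eq_of_mem_classes π y
    (hπ ⟨_, s.mem_classes y⟩ ▸ (σ ⟨_, s.mem_classes y⟩).2)

lemma Realises.image_interSetoid_univ_setOf_rel {n : ℕ} {ι : Type*} {f : ι → Setoid (Fin n)}
    {σ : ∀ i, Equiv.Perm (f i).classes} {π : Equiv.Perm (Fin n)} (hπ : ∀ i, Realises π (σ i))
    (y : Fin n) :
    π '' {x | interSetoid Set.univ f x y} = {x | interSetoid Set.univ f x (π y)} := by
  rw [_root_.image_interSetoid_univ_setOf_rel, interSetoid_univ_setOf_rel]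
  exact Set.iInter_congr fun i => (hπ i).image_setOf_rel y

lemma Realises.image_interSetoid_univ_eq {n : ℕ} {ι : Type*} {f : ι → Setoid (Fin n)}
    {σ : ∀ i, Equiv.Perm (f i).classes} {π π₀ : Equiv.Perm (Fin n)}
    (hπ : ∀ i, Realises π (σ i)) (hπ₀ : ∀ i, Realises π₀ (σ i))
    (P : (interSetoid Set.univ f).classes) : π '' (P : Set (Fin n)) = π₀ '' P := by
  obtain ⟨_, y, rfl⟩ := P
  rw [_root_.image_interSetoid_univ_setOf_rel, _root_.image_interSetoid_univ_setOf_rel]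
  exact Set.iInter_congr fun i =>
    (hπ i ⟨_, (f i).mem_classes y⟩).trans (hπ₀ i ⟨_, (f i).mem_classes y⟩).symm

theorem stmt_7_general {n m : ℕ}
    (sp : Fin m → Setoid (Fin n))
    (σ : ∀ i, Equiv.Perm (sp i).classes) :
    ∃ θ : Equiv.Perm ((interSetoid (Set.univ : Set (Fin m)) sp).classes),
      ∀ π : Equiv.Perm (Fin n), (∀ i, Realises π (σ i)) → Realises π θ := by
  by_cases hex : ∃ π₀ : Equiv.Perm (Fin n), ∀ i, Realises π₀ (σ i)
  · obtain ⟨π₀, hπ₀⟩ := hex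
    refine ⟨Setoid.classesPerm _ π₀ (Realises.image_interSetoid_univ_setOf_rel hπ₀),
      fun π hπ P => ?_⟩
    rw [Setoid.coe_classesPerm_apply]
    exact Realises.image_interSetoid_univ_eq hπ hπ₀ P
  · exact ⟨1, fun π hπ => absurd ⟨π, hπ⟩ hex⟩

/-- given `A_1,…,A_m ⊆ {0,1}ⁿ` and a tuple `σ̄` of permutations of the
parts of the coarsest supporting partitions `SP(A_i)`, there is a permutation `θ` of
the parts of `⊓_{i} SP(A_i)` realised by every `π ∈ Sym_n` that realises `σ̄`. -/
theorem stmt_7 {n m : ℕ} (A : Fin m → Set (Str n))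
    (sp : Fin m → Setoid (Fin n))
    (hsp : ∀ i, IsCoarsestSupp (setStab (A i)) (sp i))
    (σ : ∀ i, Equiv.Perm (sp i).classes) :
    ∃ θ : Equiv.Perm ((interSetoid (Set.univ : Set (Fin m)) sp).classes),
      ∀ π : Equiv.Perm (Fin n), (∀ i, Realises π (σ i)) → Realises π θ :=
  stmt_7_general sp σ
end

section
/- Let (𝒫_n) be a sequence of ordered partitions of {0,1}^n such that every v ∈ {0,1}^n occurs in some part of 𝒫_n, and let c > 0 be a constant such that for all sufficiently large n every part C of 𝒫_n satisfies |C| ≤ c·n. Let S_n = {k ∈ [n] : {k} is a singleton part of ⊓_{C∈𝒫_n} SP(C)}. Then for all sufficiently large n, |[n] \ S_n| < 8·log₂ n. -/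
/-!
Let `s` be the intersection of the partitions `SP(C)`. A permutation moving every position
within its `s`-class fixes each `SP(C)` pointwise, hence stabilises every part `C`. Greedily pick
`p` disjoint pairs of distinct `s`-equivalent positions, discarding at most one further position
per pair, so that the pairs cover at least a third of the positions in non-singleton classes.
Take a string which is `0` on the first and `1` on the second element of each pair; flipping
any subset of the pairs keeps it in its part `C`, so `2 ^ p ≤ |C| ≤ c n ≤ n ^ 2`, and the number
of non-singleton positions is at most `3 p ≤ 6 log₂ n`.
-/

theorem Setoid.singleton_mem_classes_iff {α : Type*} (s : Setoid α) (k : α) :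
    {k} ∈ s.classes ↔ ∀ j, s.r j k → j = k := by
  constructor
  · rintro ⟨y, hy⟩ j hjk
    have hky : k ∈ {x | s.r x y} := hy ▸ rfl
    have hjy : j ∈ {x | s.r x y} := s.trans' hjk hky
    rw [← hy] at hjy
    exact hjy
  · intro h
    refine ⟨k, Set.ext fun j => ⟨fun hj => (Set.mem_singleton_iff.mp hj) ▸ s.refl' j, h j⟩⟩

theorem mem_ptStab_of_forall_rel {n : ℕ} (s : Setoid (Fin n)) {π : Equiv.Perm (Fin n)}
    (hπ : ∀ x, s.r (π x) x) : π ∈ ptStab s := by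
  rintro _ ⟨w, rfl⟩
  ext x
  refine ⟨?_, fun hx => ⟨π.symm x, ?_, π.apply_symm_apply x⟩⟩
  · rintro ⟨y, hy, rfl⟩
    exact s.trans' (hπ y) hy
  · have := hπ (π.symm x)
    rw [π.apply_symm_apply] at this
    exact s.trans' (s.symm' this) hx

def HasPartners {α : Type*} (s : Setoid α) (T : Finset α) : Prop :=
  ∀ k ∈ T, ∃ j ∈ T, j ≠ k ∧ s.r j k

namespace HasPartners

variable {α : Type*} [DecidableEq α] {s : Setoid α} {T : Finset α}

theorem exists_split (hT : HasPartners s T) {k : α} (hk : k ∈ T) :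
    ∃ j ∈ T, j ≠ k ∧ s.r j k ∧
      ∃ T' ⊆ T, j ∉ T' ∧ k ∉ T' ∧ HasPartners s T' ∧ T.card ≤ T'.card + 3 := by
  obtain ⟨j, hj, hjk, hrel⟩ := hT k hk
  refine ⟨j, hj, hjk, hrel, ?_⟩
  by_cases hrest : HasPartners s (T \ {j, k})
  · refine ⟨T \ {j, k}, Finset.sdiff_subset, by simp, by simp, hrest, ?_⟩
    have := Finset.card_le_card_sdiff_add_card (s := T) (t := {j, k})
    have := Finset.card_le_two (a := j) (b := k)
    omega
  -- Some `m` lost its only partners `j, k`; then the whole class of `k` in `T` is `{j, k, m}`.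
  obtain ⟨m, hm, hm_alone⟩ : ∃ m ∈ T \ {j, k}, ∀ y ∈ T \ {j, k}, y ≠ m → ¬ s.r y m := by
    simpa [HasPartners, and_assoc] using hrest
  have hmk : s.r m k := by
    obtain ⟨y, hy, hym, hrym⟩ := hT m (Finset.sdiff_subset hm)
    have hy' : y = j ∨ y = k := by
      by_contra h
      exact hm_alone y (by simp_all) hym hrym
    rcases hy' with rfl | rfl
    · exact s.trans' (s.symm' hrym) hrel
    · exact s.symm' hrym
  refine ⟨T \ {j, k, m}, Finset.sdiff_subset, by simp, by simp, ?_, ?_⟩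
  · intro x hx
    obtain ⟨y, hy, hyx, hryx⟩ := hT x (Finset.sdiff_subset hx)
    refine ⟨y, ?_, hyx, hryx⟩
    by_contra hy'
    have hyk : s.r y k := by
      simp only [Finset.mem_sdiff, hy, true_and, not_not, Finset.mem_insert,
        Finset.mem_singleton] at hy'
      rcases hy' with rfl | rfl | rfl
      exacts [hrel, s.refl' y, hmk]
    have hxm : s.r x m := s.trans' (s.symm' hryx) (s.trans' hyk (s.symm' hmk))
    simp only [Finset.mem_sdiff, Finset.mem_insert, Finset.mem_singleton, not_or] at hx
    exact hm_alone x (by simp [hx]) hx.2.2.2 hxm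
  · have := Finset.card_le_card_sdiff_add_card (s := T) (t := {j, k, m})
    have := Finset.card_le_three (a := j) (b := k) (c := m)
    omega

theorem exists_pairing (T : Finset α) (hT : HasPartners s T) :
    ∃ (p : ℕ) (e : Fin p × Bool ↪ α), (∀ i, s.r (e (i, false)) (e (i, true))) ∧
      (∀ x, e x ∈ T) ∧ T.card ≤ 3 * p := by
  induction T using Finset.strongInduction with
  | H T ih =>
  rcases T.eq_empty_or_nonempty with rfl | ⟨k, hk⟩
  · exact ⟨0, ⟨fun x => x.1.elim0, fun x => x.1.elim0⟩, fun i => i.elim0,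
      fun x => x.1.elim0, by simp⟩
  obtain ⟨j, hj, hjk, hrel, T', hT'T, hjT', hkT', hT', hcard⟩ := hT.exists_split hk
  obtain ⟨p, e, he_rel, he_mem, hcard'⟩ :=
    ih T' ((Finset.ssubset_iff_of_subset hT'T).2 ⟨k, hk, hkT'⟩) hT'
  let e' : Fin (p + 1) × Bool → α := fun x =>
    Fin.cases (motive := fun _ => α) (cond x.2 k j) (fun i => e (i, x.2)) x.1
  have he' : Function.Injective e' := by
    have hnew : ∀ x b, e x ≠ cond b k j := by
      rintro x (_ | _) h
      · exact hjT' (by simpa [h] using he_mem x)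
      · exact hkT' (by simpa [h] using he_mem x)
    rintro ⟨i, b⟩ ⟨i', b'⟩ h
    cases i using Fin.cases <;> cases i' using Fin.cases
    · cases b <;> cases b' <;> simp_all [e', eq_comm]
    · exact absurd h.symm (hnew _ _)
    · exact absurd h (hnew _ _)
    · simpa using e.injective h
  refine ⟨p + 1, ⟨e', he'⟩, fun i => ?_, fun x => ?_, by omega⟩
  · cases i using Fin.cases
    exacts [hrel, he_rel _]
  · obtain ⟨i, b⟩ := x
    cases i using Fin.cases
    · cases b <;> simpa [e']
    · exact hT'T (he_mem _)

end HasPartners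

section PairFlip

variable {ι : Type*} [DecidableEq ι] {n : ℕ} (e : ι × Bool ↪ Fin n)

/-- Swap the two ends of every pair `e (i, ·)` with `i ∈ S`. -/
noncomputable def pairFlip (S : Finset ι) : Equiv.Perm (Fin n) :=
  Equiv.Perm.viaEmbedding
    (Equiv.prodCongrRight fun i => if i ∈ S then Equiv.boolNot else Equiv.refl Bool) e

theorem pairFlip_symm_apply (S : Finset ι) (x : ι × Bool) :
    (pairFlip e S).symm (e x) = e (x.1, if x.1 ∈ S then !x.2 else x.2) := by
  obtain ⟨i, b⟩ := x
  rw [Equiv.symm_apply_eq, pairFlip, Equiv.Perm.viaEmbedding_apply]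
  by_cases h : i ∈ S <;> simp [h]

theorem pairFlip_rel (s : Setoid (Fin n)) (he : ∀ i, s.r (e (i, false)) (e (i, true)))
    (S : Finset ι) (x : Fin n) : s.r (pairFlip e S x) x := by
  by_cases hx : x ∈ Set.range e
  · obtain ⟨⟨i, b⟩, rfl⟩ := hx
    rw [pairFlip, Equiv.Perm.viaEmbedding_apply]
    by_cases hi : i ∈ S <;> cases b <;> simp [hi, he i, s.symm' (he i)]
  · rw [pairFlip, Equiv.Perm.viaEmbedding_apply_of_notMem _ _ _ hx]

theorem act_pairFlip_apply {v : Str n} (hv : ∀ x, v (e x) = x.2) (S : Finset ι) (i : ι) :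
    act (pairFlip e S) v (e (i, false)) = decide (i ∈ S) := by
  rw [act, pairFlip_symm_apply, hv]
  by_cases hi : i ∈ S <;> simp [hi]

/-- The strings `pairFlip e S · v` are pairwise distinct, and all lie in `C` as soon as `C` is
invariant under permutations that fix every class of `s`. -/
theorem two_pow_card_le_ncard [Fintype ι] (s : Setoid (Fin n))
    (he : ∀ i, s.r (e (i, false)) (e (i, true))) {C : Set (Str n)}
    (hC : ∀ π : Equiv.Perm (Fin n), (∀ x, s.r (π x) x) → π ∈ setStab C)
    {v : Str n} (hv : ∀ x, v (e x) = x.2) (hvC : v ∈ C) :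
    2 ^ Fintype.card ι ≤ C.ncard := by
  have hmem (S : Finset ι) : act (pairFlip e S) v ∈ C := by
    rw [← hC _ (pairFlip_rel e s he S)]
    exact ⟨v, hvC, rfl⟩
  have hinj : Function.Injective fun S : Finset ι => (⟨_, hmem S⟩ : C) := by
    intro S S' h
    ext i
    simpa [act_pairFlip_apply e hv] using congrFun (congrArg Subtype.val h) (e (i, false))
  calc 2 ^ Fintype.card ι = Nat.card (Finset ι) := by simp [Fintype.card_finset]
    _ ≤ Nat.card C := Nat.card_le_card_of_injective _ hinj
    _ = C.ncard := Nat.card_coe_set_eq C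

end PairFlip

theorem Setoid.exists_pairing_ncard_nonsingleton_le {α : Type*} [Finite α] (s : Setoid α) :
    ∃ (p : ℕ) (e : Fin p × Bool ↪ α), (∀ i, s.r (e (i, false)) (e (i, true))) ∧
      {k | {k} ∉ s.classes}.ncard ≤ 3 * p := by
  classical
  have hfin := Set.toFinite {k : α | {k} ∉ s.classes}
  have hT : HasPartners s hfin.toFinset := by
    intro k hk
    simp only [Set.Finite.mem_toFinset, Set.mem_ofPred_eq, s.singleton_mem_classes_iff,
      not_forall] at hk ⊢
    obtain ⟨j, hjk, hne⟩ := hk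
    exact ⟨j, ⟨k, s.symm' hjk, Ne.symm hne⟩, hne, hjk⟩
  obtain ⟨p, e, he, -, hcard⟩ := HasPartners.exists_pairing _ hT
  exact ⟨p, e, he, (Set.ncard_eq_toFinset_card _ hfin).trans_le hcard⟩

theorem natCast_le_two_mul_logb_of_two_pow_le_sq {p n : ℕ} (hn : 0 < n) (h : 2 ^ p ≤ n ^ 2) :
    (p : ℝ) ≤ 2 * Real.logb 2 n := by
  have hsq : 2 * Real.logb 2 n = Real.logb 2 ((n : ℝ) ^ 2) := by simp [Real.logb_pow]
  rw [hsq, Real.le_logb_iff_rpow_le one_lt_two (by positivity), Real.rpow_natCast]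
  exact_mod_cast h

theorem stmt_8_general
    (m : ℕ → ℕ) (P : ∀ n, Fin (m n) → Set (Str n))
    (hpart : ∀ n, IsOrderedPartition (P n))
    (sp : ∀ n, Fin (m n) → Setoid (Fin n))
    (hsp : ∀ n i, IsCoarsestSupp (setStab (P n i)) (sp n i))
    (c : ℝ)
    (hbound : ∃ N, ∀ n ≥ N, ∀ i, ((P n i).ncard : ℝ) ≤ c * n) :
    ∃ N, ∀ n ≥ N,
      (({k : Fin n |
          {k} ∉ (interSetoid (Set.univ : Set (Fin (m n))) (sp n)).classes}).ncard : ℝ)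
        < 8 * Real.logb 2 n := by
  obtain ⟨N, hN⟩ := hbound
  obtain ⟨n₀, hc⟩ := exists_nat_ge c
  refine ⟨max N (max n₀ 2), fun n hn => ?_⟩
  simp only [ge_iff_le, max_le_iff] at hn
  obtain ⟨p, e, he, hcard⟩ :=
    (interSetoid (Set.univ : Set (Fin (m n))) (sp n)).exists_pairing_ncard_nonsingleton_le
  let v : Str n := fun k => decide (∃ i, e (i, true) = k)
  have hv : ∀ x, v (e x) = x.2 := by
    rintro ⟨i, b⟩
    cases b <;> simp [v, e.injective.eq_iff]
  obtain ⟨i, hvi⟩ := Set.iUnion_eq_univ_iff.1 (hpart n).2.2 v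
  have h2p : 2 ^ p ≤ (P n i).ncard := by
    simpa using two_pow_card_le_ncard e _ he
      (fun π hπ => (hsp n i).1 π (mem_ptStab_of_forall_rel _ fun x => hπ x i trivial)) hv hvi
  have hpn : (p : ℝ) ≤ 2 * Real.logb 2 n := by
    refine natCast_le_two_mul_logb_of_two_pow_le_sq (by omega) ?_
    have : (2 ^ p : ℝ) ≤ n ^ 2 := calc
      (2 ^ p : ℝ) ≤ (P n i).ncard := by exact_mod_cast h2p
      _ ≤ c * n := hN n hn.1 i
      _ ≤ n * n := by gcongr; exact hc.trans (by exact_mod_cast hn.2.1)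
      _ = n ^ 2 := by ring
    exact_mod_cast this
  have hlog : 0 < Real.logb 2 n := Real.logb_pos one_lt_two (by exact_mod_cast hn.2.2)
  calc (({k : Fin n | {k} ∉ (interSetoid Set.univ (sp n)).classes}).ncard : ℝ)
      ≤ 3 * p := by exact_mod_cast hcard
    _ < 8 * Real.logb 2 n := by linarith

/-- for a sequence `(𝒫_n)` of ordered partitions of `{0,1}ⁿ` with all
parts of size `≤ c·n`, the set of positions not lying in singleton parts of
`⊓_{C ∈ 𝒫_n} SP(C)` has fewer than `8·log₂ n` elements, for sufficiently large `n`. -/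
theorem stmt_8
    (m : ℕ → ℕ) (P : ∀ n, Fin (m n) → Set (Str n))
    (hpart : ∀ n, IsOrderedPartition (P n))
    (sp : ∀ n, Fin (m n) → Setoid (Fin n))
    (hsp : ∀ n i, IsCoarsestSupp (setStab (P n i)) (sp n i))
    (c : ℝ) (hc : 0 < c)
    (hbound : ∃ N, ∀ n ≥ N, ∀ i, ((P n i).ncard : ℝ) ≤ c * n) :
    ∃ N, ∀ n ≥ N,
      (({k : Fin n |
          {k} ∉ (interSetoid (Set.univ : Set (Fin (m n))) (sp n)).classes}).ncard : ℝ)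
        < 8 * Real.logb 2 n :=
  stmt_8_general m P hpart sp hsp c hbound
end

section
/- Let B ⊆ {0,1}^n, A ⊆ B, and let p : A → B be an injective map. Write ⊓A := ⊓_{a∈A} SP(a). Then there exists a map Q_p : [n] → ⊓A assigning positions to parts, with |Q_p^{-1}(P)| = |P| for every part P ∈ ⊓A, such that: every π ∈ Sym_n that realises some σ ∈ Sym(B) with σ^{-1}(a) = p(a) for all a ∈ A satisfies π(k) ∈ Q_p(k) for all k ∈ [n]. -/
/-
Realising `σ` with `σ⁻¹(a) = p(a)` forces `π · p(a) = a`, i.e. `a (π k) = p(a) k` for every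
`a ∈ A`. So the part of `⊓A` containing `π k` is determined by `k` alone, and any one realiser
`π₀` yields `Q_p(k) := [π₀ k]`; its fibres `π₀⁻¹(P)` have the right size. If nothing realises
such a `σ`, the assignment `Q_p(k) := [k]` works vacuously.
-/

theorem Setoid.setOf_rel_eq_iff_mem {α : Type*} {s : Setoid α} {P : Set α}
    (hP : P ∈ s.classes) (x : α) : {y | s.r y x} = P ↔ x ∈ P :=
  ⟨fun h => h ▸ s.refl x,
    fun h => Setoid.eq_of_mem_classes (s.mem_classes x) (s.refl x) hP h⟩

theorem Setoid.ncard_setOf_class_perm_eq {α : Type*} {s : Setoid α} (e : Equiv.Perm α)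
    {P : Set α} (hP : P ∈ s.classes) : {k | {y | s.r y (e k)} = P}.ncard = P.ncard := by
  have hfibre : {k | {y | s.r y (e k)} = P} = e.symm '' P := by
    ext k
    simp [Setoid.setOf_rel_eq_iff_mem hP, Equiv.image_symm_eq_preimage]
  rw [hfibre, Set.ncard_image_of_injective _ e.symm.injective]

theorem apply_perm_eq_of_act_eq {n : ℕ} {π : Equiv.Perm (Fin n)} {v w : Str n}
    (h : act π v = w) (k : Fin n) : w (π k) = v k := by
  simp [← h, act]

def RealisesWithInv {n : ℕ} {B A : Set (Str n)} (hAB : A ⊆ B) (p : Str n → Str n)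
    (π : Equiv.Perm (Fin n)) (σ : Equiv.Perm B) : Prop :=
  (∀ b : B, act π (b : Str n) = ((σ b : B) : Str n)) ∧
    ∀ a (ha : a ∈ A), ((σ.symm ⟨a, hAB ha⟩ : B) : Str n) = p a

theorem RealisesWithInv.apply_perm_eq {n : ℕ} {B A : Set (Str n)} {hAB : A ⊆ B}
    {p : Str n → Str n} {π : Equiv.Perm (Fin n)} {σ : Equiv.Perm B}
    (h : RealisesWithInv hAB p π σ) {a : Str n} (ha : a ∈ A) (k : Fin n) :
    a (π k) = p a k := by
  have hact := h.1 (σ.symm ⟨a, hAB ha⟩)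
  rw [h.2 a ha, Equiv.apply_symm_apply] at hact
  exact apply_perm_eq_of_act_eq hact k

theorem stmt_13_general {n : ℕ} (B A : Set (Str n)) (hAB : A ⊆ B)
    (p : Str n → Str n) :
    ∃ Q : Fin n → Set (Fin n),
      (∀ k, Q k ∈ (interSetoid A strSetoid).classes) ∧
      (∀ P ∈ (interSetoid A strSetoid).classes, ({k | Q k = P}).ncard = P.ncard) ∧
      (∀ (π : Equiv.Perm (Fin n)) (σ : Equiv.Perm B),
        (∀ b : B, act π (b : Str n) = ((σ b : B) : Str n)) →
        (∀ a (ha : a ∈ A), ((σ.symm ⟨a, hAB ha⟩ : B) : Str n) = p a) →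
        ∀ k, π k ∈ Q k) := by
  set s := interSetoid A strSetoid
  obtain ⟨π₀, hπ₀⟩ : ∃ π₀ : Equiv.Perm (Fin n),
      ∀ π σ, RealisesWithInv hAB p π σ → ∀ k, s.r (π k) (π₀ k) := by
    by_cases hex : ∃ π σ, RealisesWithInv hAB p π σ
    · obtain ⟨π₀, σ₀, h₀⟩ := hex
      refine ⟨π₀, fun π σ h k a ha => ?_⟩
      change a (π k) = a (π₀ k)
      rw [h.apply_perm_eq ha, h₀.apply_perm_eq ha]
    · exact ⟨1, fun π σ h => (hex ⟨π, σ, h⟩).elim⟩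
  exact ⟨fun k => {y | s.r y (π₀ k)}, fun k => s.mem_classes (π₀ k),
    fun P hP => Setoid.ncard_setOf_class_perm_eq π₀ hP,
    fun π σ hπ hσ => hπ₀ π σ ⟨hπ, hσ⟩⟩

/-- given `A ⊆ B ⊆ {0,1}ⁿ` and an injective `p : A → B`, there is an
assignment `Q_p : [n] → ⊓A` of positions to parts of `⊓A := ⊓_{a∈A} SP(a)`, with
`|Q_p⁻¹(P)| = |P|` for every part `P`, such that every `π ∈ Sym_n` realising some
`σ ∈ Sym(B)` with `σ⁻¹(a) = p(a)` for all `a ∈ A` satisfies `π(k) ∈ Q_p(k)` for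
all `k`. -/
theorem stmt_13 {n : ℕ} (B A : Set (Str n)) (hAB : A ⊆ B)
    (p : Str n → Str n) (hmaps : Set.MapsTo p A B) (hinj : Set.InjOn p A) :
    ∃ Q : Fin n → Set (Fin n),
      (∀ k, Q k ∈ (interSetoid A strSetoid).classes) ∧
      (∀ P ∈ (interSetoid A strSetoid).classes, ({k | Q k = P}).ncard = P.ncard) ∧
      (∀ (π : Equiv.Perm (Fin n)) (σ : Equiv.Perm B),
        (∀ b : B, act π (b : Str n) = ((σ b : B) : Str n)) →
        (∀ a (ha : a ∈ A), ((σ.symm ⟨a, hAB ha⟩ : B) : Str n) = p a) →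
        ∀ k, π k ∈ Q k) :=
  stmt_13_general B A hAB p
end

section
/- Let B_n ⊆ {0,1}^n and let S_n = {k ∈ [n] : {k} is a singleton part of SP(B_n)}. Then there exists a subset A_n ⊆ B_n with |A_n| ≤ |S_n|/2 such that for every part P of ⊓A_n := ⊓_{a∈A_n} SP(a), at least one of the following holds: (1) |P ∩ S_n| ≤ 2; or (2) |P ∩ S_n| > 2 and for every b ∈ B_n \ A_n either b is constant on P ∩ S_n, or b[P ∩ S_n] is imbalanced and b is constant on P' ∩ S_n for every part P' ≠ P of ⊓A_n with |P' ∩ S_n| > 2. -/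
/-- `b` is constant on a set `T` of positions: all zeros or all ones there. -/
def ConstOn {n : ℕ} (b : Str n) (T : Set (Fin n)) : Prop :=
  (∀ k ∈ T, b k = false) ∨ (∀ k ∈ T, b k = true)

/-- `b[T]` is imbalanced: exactly one `0` and ones elsewhere, or exactly one `1`
and zeros elsewhere. -/
def Imbalanced {n : ℕ} (b : Str n) (T : Set (Fin n)) : Prop :=
  (∃ k ∈ T, b k = false ∧ ∀ j ∈ T, j ≠ k → b j = true) ∨
  (∃ k ∈ T, b k = true ∧ ∀ j ∈ T, j ≠ k → b j = false)


/-!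
Greedy refinement with the potential `Φ(A) = ∑_P (|P ∩ S| - 2)⁺`, the sum running over the parts
`P` of `⊓A`. Initially `Φ(∅) ≤ |S|`, and splitting a part by a string never increases `Φ`. If some
`b ∈ B \ A` violates the conclusion on a part `P`, then `b` splits `P ∩ S` either into two halves of
size at least two, or into a singleton and the rest while also splitting a second large part; in
both cases adding `b` to `A` lowers `Φ` by at least two. So the greedy process stops with
`2 |A| ≤ Φ(∅) ≤ |S|`.
-/

theorem Finset.sum_add_le_sum_of_subset {ι : Type*} [DecidableEq ι] {s u : Finset ι}
    {f g : ι → ℕ} {k : ℕ} (hus : u ⊆ s) (hfg : ∀ i ∈ s, f i ≤ g i)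
    (hu : ∑ i ∈ u, f i + k ≤ ∑ i ∈ u, g i) : ∑ i ∈ s, f i + k ≤ ∑ i ∈ s, g i := by
  have hrest : ∑ i ∈ s \ u, f i ≤ ∑ i ∈ s \ u, g i :=
    Finset.sum_le_sum fun i hi => hfg i (Finset.mem_sdiff.mp hi).1
  rw [← Finset.sum_sdiff hus, ← Finset.sum_sdiff (f := g) hus]
  omega

section Excess

variable {X : Type*} [Finite X]

/-- The subtraction truncates: each part `P` contributes `(|P ∩ S| - 2)⁺`. -/
noncomputable def excessSum (S : Set X) (s : Setoid X) : ℕ :=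
  ∑ P ∈ (Set.toFinite s.classes).toFinset, ((P ∩ S).ncard - 2)

noncomputable def splitExcess (b : X → Bool) (T : Set X) : ℕ :=
  ((T ∩ {x | b x = false}).ncard - 2) + ((T ∩ {x | b x = true}).ncard - 2)

omit [Finite X] in
lemma exists_eq_inter_of_mem_classes {s t : Setoid X} {b : X → Bool}
    (hst : ∀ x y, s x y ↔ b x = b y ∧ t x y) {Q : Set X} (hQ : Q ∈ s.classes) :
    ∃ P ∈ t.classes, ∃ c, Q = P ∩ {x | b x = c} := by
  obtain ⟨y, rfl⟩ := hQ
  refine ⟨_, t.mem_classes y, b y, ?_⟩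
  ext x
  simp only [Set.mem_ofPred_eq, Set.mem_inter_iff, hst, and_comm]

lemma ncard_inter_false_add_ncard_inter_true (T : Set X) (b : X → Bool) :
    (T ∩ {x | b x = false}).ncard + (T ∩ {x | b x = true}).ncard = T.ncard := by
  have hfalse : T ∩ {x | b x = false} = T \ {x | b x = true} := by
    ext x
    simp
  rw [hfalse, add_comm, Set.ncard_inter_add_ncard_sdiff_eq_ncard]

lemma splitExcess_le (b : X → Bool) (T : Set X) : splitExcess b T ≤ T.ncard - 2 := by
  have := ncard_inter_false_add_ncard_inter_true T b
  unfold splitExcess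
  omega

lemma excessSum_le_sum_splitExcess (S : Set X) {s t : Setoid X} {b : X → Bool}
    (hst : ∀ x y, s x y ↔ b x = b y ∧ t x y) :
    excessSum S s ≤ ∑ P ∈ (Set.toFinite t.classes).toFinset, splitExcess b (P ∩ S) := by
  classical
  let piece : Set X × Bool → Set X := fun Pc => Pc.1 ∩ {x | b x = Pc.2}
  have hsub : (Set.toFinite s.classes).toFinset ⊆
      ((Set.toFinite t.classes).toFinset ×ˢ Finset.univ).image piece := by
    intro Q hQ
    obtain ⟨P, hP, c, rfl⟩ := exists_eq_inter_of_mem_classes hst (by simpa using hQ)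
    exact Finset.mem_image.mpr ⟨(P, c), by simpa using hP, rfl⟩
  calc excessSum S s
      ≤ ∑ Q ∈ ((Set.toFinite t.classes).toFinset ×ˢ Finset.univ).image piece,
          ((Q ∩ S).ncard - 2) := Finset.sum_le_sum_of_subset hsub
    _ ≤ ∑ Pc ∈ (Set.toFinite t.classes).toFinset ×ˢ Finset.univ, ((piece Pc ∩ S).ncard - 2) :=
        Finset.sum_image_le_of_nonneg fun _ _ => Nat.zero_le _
    _ = ∑ P ∈ (Set.toFinite t.classes).toFinset, splitExcess b (P ∩ S) := by
        rw [Finset.sum_product]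
        refine Finset.sum_congr rfl fun P _ => ?_
        simp only [piece, Fintype.sum_bool, splitExcess, Set.inter_right_comm P, add_comm]

end Excess

section Strings

variable {n : ℕ}

lemma one_le_ncard_inter_of_not_constOn {b : Str n} {T : Set (Fin n)} (h : ¬ ConstOn b T)
    (c : Bool) : 1 ≤ (T ∩ {x | b x = c}).ncard := by
  simp only [ConstOn, not_or, not_forall, Bool.not_eq_false, Bool.not_eq_true] at h
  obtain ⟨⟨k₁, hk₁, hb₁⟩, ⟨k₀, hk₀, hb₀⟩⟩ := h
  cases c
  · exact (Set.ncard_pos).mpr ⟨k₀, hk₀, hb₀⟩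
  · exact (Set.ncard_pos).mpr ⟨k₁, hk₁, hb₁⟩

lemma imbalanced_of_ncard_inter_eq_one {b : Str n} {T : Set (Fin n)} {c : Bool}
    (h : (T ∩ {x | b x = c}).ncard = 1) : Imbalanced b T := by
  obtain ⟨k, hk⟩ := Set.ncard_eq_one.mp h
  have hkT : k ∈ T ∩ {x | b x = c} := hk ▸ rfl
  have hother : ∀ j ∈ T, j ≠ k → b j ≠ c := fun j hj hjk hbj =>
    hjk (hk ▸ (⟨hj, hbj⟩ : j ∈ T ∩ {x | b x = c}) : j ∈ ({k} : Set (Fin n)))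
  cases c
  · exact Or.inl ⟨k, hkT.1, hkT.2, fun j hj hjk => by simpa using hother j hj hjk⟩
  · exact Or.inr ⟨k, hkT.1, hkT.2, fun j hj hjk => by simpa using hother j hj hjk⟩

lemma splitExcess_add_one_le {b : Str n} {T : Set (Fin n)} (hT : 2 < T.ncard)
    (h : ¬ ConstOn b T) : splitExcess b T + 1 ≤ T.ncard - 2 := by
  have := ncard_inter_false_add_ncard_inter_true T b
  have := one_le_ncard_inter_of_not_constOn h false
  have := one_le_ncard_inter_of_not_constOn h true
  unfold splitExcess
  omega

lemma splitExcess_add_two_le {b : Str n} {T : Set (Fin n)} (hc : ¬ ConstOn b T)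
    (hi : ¬ Imbalanced b T) : splitExcess b T + 2 ≤ T.ncard - 2 := by
  have := ncard_inter_false_add_ncard_inter_true T b
  have := one_le_ncard_inter_of_not_constOn hc false
  have := one_le_ncard_inter_of_not_constOn hc true
  have := mt (imbalanced_of_ncard_inter_eq_one (c := false)) hi
  have := mt (imbalanced_of_ncard_inter_eq_one (c := true)) hi
  unfold splitExcess
  omega

lemma interSetoid_insert_iff (A : Set (Str n)) (b : Str n) (x y : Fin n) :
    interSetoid (insert b A) strSetoid x y ↔ b x = b y ∧ interSetoid A strSetoid x y :=
  Set.forall_mem_insert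

lemma excessSum_interSetoid_empty_le (S : Set (Fin n)) :
    excessSum S (interSetoid (∅ : Set (Str n)) strSetoid) ≤ S.ncard := by
  have hsub : (Set.toFinite (interSetoid (∅ : Set (Str n)) strSetoid).classes).toFinset ⊆
      {Set.univ} := by
    rintro _ hP
    obtain ⟨y, rfl⟩ := (Set.Finite.mem_toFinset _).mp hP
    simp only [Finset.mem_singleton, Set.eq_univ_iff_forall]
    exact fun _ a ha => absurd ha (Set.notMem_empty a)
  calc excessSum S (interSetoid (∅ : Set (Str n)) strSetoid)
      ≤ ∑ P ∈ ({Set.univ} : Finset (Set (Fin n))), ((P ∩ S).ncard - 2) :=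
        Finset.sum_le_sum_of_subset hsub
    _ ≤ S.ncard := by simp

def NearlyConstantOnLargeParts (B : Set (Str n)) (S : Set (Fin n)) (A : Set (Str n)) : Prop :=
  ∀ P ∈ (interSetoid A strSetoid).classes,
    (P ∩ S).ncard ≤ 2 ∨
    ((P ∩ S).ncard > 2 ∧ ∀ b ∈ B \ A,
      ConstOn b (P ∩ S) ∨
      (Imbalanced b (P ∩ S) ∧ ∀ P' ∈ (interSetoid A strSetoid).classes,
        P' ≠ P → (P' ∩ S).ncard > 2 → ConstOn b (P' ∩ S)))

lemma exists_excessSum_insert_add_two_le {B : Set (Str n)} {S : Set (Fin n)} {A : Set (Str n)}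
    (h : ¬ NearlyConstantOnLargeParts B S A) :
    ∃ b ∈ B \ A, excessSum S (interSetoid (insert b A) strSetoid) + 2 ≤
      excessSum S (interSetoid A strSetoid) := by
  classical
  simp only [NearlyConstantOnLargeParts, not_forall, not_or, not_and, not_le,
    exists_prop] at h
  obtain ⟨P, hP, hPS, hbad⟩ := h
  obtain ⟨b, hb, hconst, himb⟩ := hbad hPS
  refine ⟨b, hb, (Nat.add_le_add_right
    (excessSum_le_sum_splitExcess S (interSetoid_insert_iff A b)) 2).trans ?_⟩
  have hPf : P ∈ (Set.toFinite (interSetoid A strSetoid).classes).toFinset := by simpa using hP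
  by_cases hi : Imbalanced b (P ∩ S)
  · obtain ⟨P', hP', hne, hP'S, hconst'⟩ := himb hi
    have hP'f : P' ∈ (Set.toFinite (interSetoid A strSetoid).classes).toFinset := by
      simpa using hP'
    refine Finset.sum_add_le_sum_of_subset (u := {P, P'})
      (Finset.insert_subset hPf (Finset.singleton_subset_iff.mpr hP'f))
      (fun Q _ => splitExcess_le b _) ?_
    rw [Finset.sum_pair (Ne.symm hne), Finset.sum_pair (Ne.symm hne)]
    have := splitExcess_add_one_le hPS hconst
    have := splitExcess_add_one_le hP'S hconst'
    omega
  · refine Finset.sum_add_le_sum_of_subset (u := {P}) (by simpa using hPf)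
      (fun Q _ => splitExcess_le b _) ?_
    simpa using splitExcess_add_two_le hconst hi

theorem exists_nearlyConstantOnLargeParts (B : Set (Str n)) (S : Set (Fin n)) (A : Set (Str n))
    (hAB : A ⊆ B) :
    ∃ A' ⊆ B, NearlyConstantOnLargeParts B S A' ∧
      2 * A'.ncard + excessSum S (interSetoid A' strSetoid) ≤
        2 * A.ncard + excessSum S (interSetoid A strSetoid) := by
  by_cases h : NearlyConstantOnLargeParts B S A
  · exact ⟨A, hAB, h, le_rfl⟩
  obtain ⟨b, hb, hdrop⟩ := exists_excessSum_insert_add_two_le h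
  obtain ⟨A', hA'B, hA', hle⟩ :=
    exists_nearlyConstantOnLargeParts B S (insert b A) (Set.insert_subset hb.1 hAB)
  have hcard : (insert b A).ncard = A.ncard + 1 := Set.ncard_insert_of_notMem hb.2
  exact ⟨A', hA'B, hA', by omega⟩
termination_by excessSum S (interSetoid A strSetoid)
decreasing_by omega

end Strings

theorem stmt_16_general {n : ℕ} (B : Set (Str n))
    (S : Set (Fin n)) :
    ∃ A ⊆ B, (A.ncard : ℝ) ≤ (S.ncard : ℝ) / 2 ∧
      ∀ P ∈ (interSetoid A strSetoid).classes,
        (P ∩ S).ncard ≤ 2 ∨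
        ((P ∩ S).ncard > 2 ∧ ∀ b ∈ B \ A,
          ConstOn b (P ∩ S) ∨
          (Imbalanced b (P ∩ S) ∧ ∀ P' ∈ (interSetoid A strSetoid).classes,
            P' ≠ P → (P' ∩ S).ncard > 2 → ConstOn b (P' ∩ S))) := by
  obtain ⟨A, hAB, hA, hle⟩ := exists_nearlyConstantOnLargeParts B S ∅ (Set.empty_subset B)
  have h0 := excessSum_interSetoid_empty_le (n := n) S
  rw [Set.ncard_empty] at hle
  have hcard : (2 * A.ncard : ℝ) ≤ S.ncard := by exact_mod_cast (by omega : 2 * A.ncard ≤ S.ncard)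
  exact ⟨A, hAB, by linarith, hA⟩

/-- for `B_n ⊆ {0,1}ⁿ` and `S_n` the set of positions in singleton
parts of `SP(B_n)`, there is `A_n ⊆ B_n` with `|A_n| ≤ |S_n|/2` such that every part
`P` of `⊓A_n` satisfies `|P ∩ S_n| ≤ 2`, or `|P ∩ S_n| > 2` and every
`b ∈ B_n \ A_n` is constant on `P ∩ S_n`, or imbalanced there and constant on all
other large parts. -/
theorem stmt_16 {n : ℕ} (B : Set (Str n))
    (spB : Setoid (Fin n)) (hspB : IsCoarsestSupp (setStab B) spB)
    (S : Set (Fin n)) (hS : S = {k | {k} ∈ spB.classes}) :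
    ∃ A ⊆ B, (A.ncard : ℝ) ≤ (S.ncard : ℝ) / 2 ∧
      ∀ P ∈ (interSetoid A strSetoid).classes,
        (P ∩ S).ncard ≤ 2 ∨
        ((P ∩ S).ncard > 2 ∧ ∀ b ∈ B \ A,
          ConstOn b (P ∩ S) ∨
          (Imbalanced b (P ∩ S) ∧ ∀ P' ∈ (interSetoid A strSetoid).classes,
            P' ≠ P → (P' ∩ S).ncard > 2 → ConstOn b (P' ∩ S))) :=
  stmt_16_general B S
end
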